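/- arXiv:2101.10357 — 4 statements merged into one kernel-verified Lean document; each statement's English description precedes it below -/
import Mathlib

section
/- With T_K = [L - K H, -K] and K_0 = L H* (I + H H*)^{-1}, the choice K_0 also minimizes the operator (spectral) norm of T_K over all K; in fact T_K T_K* ⪰ T_{K_0} T_{K_0}* in the positive semidefinite order for every K. -/
/-!
Expanding the Gram matrix of `T_K = [L - K H, -K]` gives
`T_K T_Kᴴ = L Lᴴ - L Hᴴ Kᴴ - K H Lᴴ + K M Kᴴ` with `M = 1 + H Hᴴ ≻ 0`, a quadratic in `K` centred
at the solution `K₀ = L Hᴴ M⁻¹` of `K₀ M = L Hᴴ`. Completing the square,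
`T_K T_Kᴴ - T_{K₀} T_{K₀}ᴴ = (K - K₀) M (K - K₀)ᴴ ⪰ 0`. The norm inequality follows from the
C*-identity `‖T‖² = ‖T Tᴴ‖` and monotonicity of the norm on positive matrices.
-/

open Matrix
open scoped ComplexOrder

/-- The error operator `T_K = [L - K H, -K]`. -/
noncomputable def Terr {m n p : ℕ} (H : Matrix (Fin m) (Fin n) ℂ) (L : Matrix (Fin p) (Fin n) ℂ)
    (K : Matrix (Fin p) (Fin m) ℂ) : Matrix (Fin p) (Fin n ⊕ Fin m) ℂ :=
  Matrix.fromCols (L - K * H) (-K)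

/-- The noncausal estimator `K₀ = L H* (I + H H*)⁻¹`. -/
noncomputable def Kzero {m n p : ℕ} (H : Matrix (Fin m) (Fin n) ℂ)
    (L : Matrix (Fin p) (Fin n) ℂ) : Matrix (Fin p) (Fin m) ℂ :=
  L * Hᴴ * (1 + H * Hᴴ)⁻¹

open scoped Matrix.Norms.L2Operator MatrixOrder

namespace Matrix

variable {ι κ R : Type*} [Fintype κ] [Ring R] [StarRing R]

theorem sub_mul_mul_conjTranspose_sub {M : Matrix κ κ R} (hM : M.IsHermitian)
    {J C : Matrix ι κ R} (hJ : J * M = C) (K : Matrix ι κ R) :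
    (K - J) * M * (K - J)ᴴ =
      (K * M * Kᴴ - K * Cᴴ - C * Kᴴ) - (J * M * Jᴴ - J * Cᴴ - C * Jᴴ) := by
  subst hJ
  simp only [conjTranspose_sub, conjTranspose_mul, hM.eq, Matrix.sub_mul, Matrix.mul_sub,
    Matrix.mul_assoc]
  abel

theorem posDef_one_add_self_mul_conjTranspose {𝕜 ι κ : Type*} [RCLike 𝕜] [Fintype ι]
    [DecidableEq ι] [Fintype κ] (H : Matrix ι κ 𝕜) : (1 + H * Hᴴ).PosDef :=
  PosDef.one.add_posSemidef (posSemidef_self_mul_conjTranspose H)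

theorem l2_opNorm_le_of_posSemidef_sub {ι κ₁ κ₂ : Type*} [Fintype ι] [DecidableEq ι]
    [Fintype κ₁] [DecidableEq κ₁] [Fintype κ₂] [DecidableEq κ₂]
    {A : Matrix ι κ₁ ℂ} {B : Matrix ι κ₂ ℂ}
    (h : (A * Aᴴ - B * Bᴴ).PosSemidef) : ‖B‖ ≤ ‖A‖ := by
  have hle : ‖B * Bᴴ‖ ≤ ‖A * Aᴴ‖ :=
    CStarAlgebra.norm_le_norm_of_nonneg_of_le (posSemidef_self_mul_conjTranspose B).nonneg
      (le_iff.mpr h)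
  have hB := l2_opNorm_conjTranspose_mul_self Bᴴ
  have hA := l2_opNorm_conjTranspose_mul_self Aᴴ
  rw [conjTranspose_conjTranspose, l2_opNorm_conjTranspose] at hB hA
  rw [hB, hA] at hle
  exact (mul_self_le_mul_self_iff (norm_nonneg _) (norm_nonneg _)).mpr hle

end Matrix

section Estimator

variable {m n p : ℕ} (H : Matrix (Fin m) (Fin n) ℂ) (L : Matrix (Fin p) (Fin n) ℂ)

theorem terr_mul_conjTranspose (K : Matrix (Fin p) (Fin m) ℂ) :
    Terr H L K * (Terr H L K)ᴴ =
      L * Lᴴ + (K * (1 + H * Hᴴ) * Kᴴ - K * (L * Hᴴ)ᴴ - L * Hᴴ * Kᴴ) := by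
  simp only [Terr, conjTranspose_fromCols_eq_fromRows_conjTranspose, fromCols_mul_fromRows,
    conjTranspose_sub, conjTranspose_mul, conjTranspose_neg, conjTranspose_conjTranspose,
    Matrix.sub_mul, Matrix.mul_sub, Matrix.add_mul, Matrix.mul_add, Matrix.neg_mul,
    Matrix.mul_neg, neg_neg, Matrix.mul_one, Matrix.mul_assoc]
  abel

theorem kzero_mul_one_add_mul_conjTranspose : Kzero H L * (1 + H * Hᴴ) = L * Hᴴ := by
  rw [Kzero, Matrix.mul_assoc, nonsing_inv_mul _
    (posDef_one_add_self_mul_conjTranspose H).det_pos.ne'.isUnit, Matrix.mul_one]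

theorem terr_gram_sub_terr_kzero_gram (K : Matrix (Fin p) (Fin m) ℂ) :
    Terr H L K * (Terr H L K)ᴴ - Terr H L (Kzero H L) * (Terr H L (Kzero H L))ᴴ =
      (K - Kzero H L) * (1 + H * Hᴴ) * (K - Kzero H L)ᴴ := by
  rw [terr_mul_conjTranspose, terr_mul_conjTranspose, add_sub_add_left_eq_sub,
    sub_mul_mul_conjTranspose_sub (posDef_one_add_self_mul_conjTranspose H).isHermitian
      (kzero_mul_one_add_mul_conjTranspose H L)]

end Estimator

/-- `K₀` minimizes the operator (spectral) norm of `T_K`; in fact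
`T_K T_K* ⪰ T_{K₀} T_{K₀}*` in the Loewner order for every `K`. -/
theorem kzero_minimizes_opNorm {m n p : ℕ}
    (H : Matrix (Fin m) (Fin n) ℂ) (L : Matrix (Fin p) (Fin n) ℂ)
    (K : Matrix (Fin p) (Fin m) ℂ) :
    (Terr H L K * (Terr H L K)ᴴ - Terr H L (Kzero H L) * (Terr H L (Kzero H L))ᴴ).PosSemidef ∧
      ‖Terr H L (Kzero H L)‖ ≤ ‖Terr H L K‖ := by
  have hpsd :=
    (posDef_one_add_self_mul_conjTranspose H).posSemidef.mul_mul_conjTranspose_same (K - Kzero H L)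
  rw [← terr_gram_sub_terr_kzero_gram] at hpsd
  exact ⟨hpsd, l2_opNorm_le_of_posSemidef_sub hpsd⟩
end

section
/- For every matrix K, the cross term satisfies T_K T_{K_0}* = T_{K_0} T_{K_0}*, i.e., the product T_K T_{K_0}* does not depend on K. -/
/-!
Every `T_K` satisfies `T_K [I; -H] = L`. The normal equation `(I + H H*) K₀* = H L*` says
exactly that `T_{K₀}* = [I; -H] (L - K₀ H)*`, hence `T_K T_{K₀}* = L (L - K₀ H)*` for every `K`.
-/

open Matrix

theorem Matrix.fromCols_sub_mul_neg_mul_fromRows_one_neg {R ι κ μ : Type*} [Ring R]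
    [Fintype ι] [Fintype κ] [DecidableEq ι] (H : Matrix κ ι R) (L : Matrix μ ι R)
    (K : Matrix μ κ R) :
    fromCols (L - K * H) (-K) * fromRows (1 : Matrix ι ι R) (-H) = L := by
  rw [fromCols_mul_fromRows, Matrix.mul_one, Matrix.neg_mul, Matrix.mul_neg, neg_neg, sub_add_cancel]

theorem Matrix.mul_conjTranspose_sub_mul_eq_conjTranspose_iff {R ι κ μ : Type*} [Ring R]
    [StarRing R] [Fintype ι] [Fintype κ] [DecidableEq κ] (H : Matrix κ ι R)
    (L : Matrix μ ι R) (K : Matrix μ κ R) :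
    H * (L - K * H)ᴴ = Kᴴ ↔ (1 + H * Hᴴ) * Kᴴ = H * Lᴴ := by
  rw [conjTranspose_sub, conjTranspose_mul, Matrix.mul_sub, Matrix.add_mul, Matrix.one_mul,
    ← Matrix.mul_assoc, sub_eq_iff_eq_add, add_comm, eq_comm]

open scoped ComplexOrder in
theorem one_add_mul_conjTranspose_mul_conjTranspose_Kzero {m n p : ℕ}
    (H : Matrix (Fin m) (Fin n) ℂ) (L : Matrix (Fin p) (Fin n) ℂ) :
    (1 + H * Hᴴ) * (Kzero H L)ᴴ = H * Lᴴ := by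
  have hpd : (1 + H * Hᴴ).PosDef :=
    PosDef.one.add_posSemidef (posSemidef_self_mul_conjTranspose H)
  rw [Kzero, conjTranspose_mul, conjTranspose_mul, conjTranspose_nonsing_inv,
    hpd.isHermitian.eq, conjTranspose_conjTranspose,
    mul_nonsing_inv_cancel_left _ _ ((isUnit_iff_isUnit_det _).1 hpd.isUnit)]

theorem conjTranspose_Terr_Kzero {m n p : ℕ}
    (H : Matrix (Fin m) (Fin n) ℂ) (L : Matrix (Fin p) (Fin n) ℂ) :
    (Terr H L (Kzero H L))ᴴ = fromRows (1 : Matrix (Fin n) (Fin n) ℂ) (-H) * (L - Kzero H L * H)ᴴ := by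
  have hK : H * (L - Kzero H L * H)ᴴ = (Kzero H L)ᴴ :=
    (mul_conjTranspose_sub_mul_eq_conjTranspose_iff H L _).2
      (one_add_mul_conjTranspose_mul_conjTranspose_Kzero H L)
  rw [Terr, conjTranspose_fromCols_eq_fromRows_conjTranspose, fromRows_mul, Matrix.one_mul,
    Matrix.neg_mul, hK, conjTranspose_neg]

/-- the cross term `T_K T_{K₀}* = T_{K₀} T_{K₀}*` does not depend on `K`. -/
theorem cross_term_invariant {m n p : ℕ}
    (H : Matrix (Fin m) (Fin n) ℂ) (L : Matrix (Fin p) (Fin n) ℂ)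
    (K : Matrix (Fin p) (Fin m) ℂ) :
    Terr H L K * (Terr H L (Kzero H L))ᴴ
      = Terr H L (Kzero H L) * (Terr H L (Kzero H L))ᴴ := by
  have hT : ∀ K', Terr H L K' * (Terr H L (Kzero H L))ᴴ = L * (L - Kzero H L * H)ᴴ := by
    intro K'
    rw [conjTranspose_Terr_Kzero, ← Matrix.mul_assoc, Terr,
      fromCols_sub_mul_neg_mul_fromRows_one_neg]
  rw [hT, hT]
end

section
/- The error of the noncausal estimator satisfies T_{K_0} T_{K_0}* = L (I + H* H)^{-1} L*. -/
/-!
Push-through identity: `H* (I + H H*)⁻¹ = (I + H* H)⁻¹ H*`. With `B = (I + H* H)⁻¹` it gives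
`K₀ = L B H*` and `L - K₀ H = L B (I + H* H) - L B H* H = L B`, so `T_{K₀} = L B [I, -H*]`.
Since `[I, -H*] [I, -H*]* = I + H* H` and `B` is Hermitian, `T_{K₀} T_{K₀}* = L B L*`.
-/

open Matrix

open scoped ComplexOrder

namespace Matrix

/-- When `1 + A * B` is singular so is `1 + B * A` (Weinstein–Aronszajn), and both sides vanish. -/
theorem mul_nonsing_inv_one_add_mul_comm {m n α : Type*} [Fintype m] [Fintype n]
    [DecidableEq m] [DecidableEq n] [CommRing α] (A : Matrix m n α) (B : Matrix n m α) :
    B * (1 + A * B)⁻¹ = (1 + B * A)⁻¹ * B := by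
  by_cases hAB : IsUnit (1 + A * B).det
  · have hBA : IsUnit (1 + B * A).det := by rwa [det_one_add_mul_comm]
    have hcomm : (1 + B * A) * B = B * (1 + A * B) := by
      simp only [Matrix.add_mul, Matrix.mul_add, Matrix.one_mul, Matrix.mul_one, Matrix.mul_assoc]
    calc B * (1 + A * B)⁻¹ = (1 + B * A)⁻¹ * ((1 + B * A) * B) * (1 + A * B)⁻¹ := by
          rw [nonsing_inv_mul_cancel_left _ _ hBA]
      _ = (1 + B * A)⁻¹ * B := by
          rw [hcomm, ← Matrix.mul_assoc, mul_nonsing_inv_cancel_right _ _ hAB]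
  · have hBA : ¬IsUnit (1 + B * A).det := by rwa [det_one_add_mul_comm]
    rw [nonsing_inv_apply_not_isUnit _ hAB, nonsing_inv_apply_not_isUnit _ hBA,
      Matrix.mul_zero, Matrix.zero_mul]

theorem isUnit_det_one_add_conjTranspose_mul {m n 𝕜 : Type*} [Fintype m] [Fintype n]
    [DecidableEq n] [RCLike 𝕜] (H : Matrix m n 𝕜) :
    IsUnit (1 + Hᴴ * H).det :=
  (PosDef.one.add_posSemidef (posSemidef_conjTranspose_mul_self H)).isUnit.map
    detMonoidHom

theorem fromCols_one_neg_mul_conjTranspose {m n α : Type*} [Fintype m] [Fintype n]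
    [DecidableEq n] [Ring α] [StarRing α] (H : Matrix m n α) :
    fromCols (1 : Matrix n n α) (-Hᴴ) * (fromCols (1 : Matrix n n α) (-Hᴴ))ᴴ = 1 + Hᴴ * H := by
  rw [conjTranspose_fromCols_eq_fromRows_conjTranspose, fromCols_mul_fromRows]
  simp

end Matrix

section

variable {m n p : ℕ} (H : Matrix (Fin m) (Fin n) ℂ) (L : Matrix (Fin p) (Fin n) ℂ)

theorem Kzero_eq_inv_mul_conjTranspose : Kzero H L = L * (1 + Hᴴ * H)⁻¹ * Hᴴ := by
  rw [Kzero, Matrix.mul_assoc, mul_nonsing_inv_one_add_mul_comm, Matrix.mul_assoc]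

theorem Terr_Kzero_eq_mul_fromCols :
    Terr H L (Kzero H L) = L * (1 + Hᴴ * H)⁻¹ * fromCols 1 (-Hᴴ) := by
  set B := (1 + Hᴴ * H)⁻¹
  have hB : B + B * (Hᴴ * H) = 1 := by
    simpa only [Matrix.mul_add, Matrix.mul_one] using
      nonsing_inv_mul _ (isUnit_det_one_add_conjTranspose_mul H)
  rw [Terr, Kzero_eq_inv_mul_conjTranspose, mul_fromCols, Matrix.mul_one, Matrix.mul_neg]
  congr 1
  calc L - L * B * Hᴴ * H = L * (B + B * (Hᴴ * H)) - L * B * Hᴴ * H := by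
        rw [hB, Matrix.mul_one]
    _ = L * B := by simp only [Matrix.mul_add, Matrix.mul_assoc, add_sub_cancel_right]

end

/-- `T_{K₀} T_{K₀}* = L (I + H* H)⁻¹ L*`. -/
theorem noncausal_error {m n p : ℕ}
    (H : Matrix (Fin m) (Fin n) ℂ) (L : Matrix (Fin p) (Fin n) ℂ) :
    Terr H L (Kzero H L) * (Terr H L (Kzero H L))ᴴ
      = L * (1 + Hᴴ * H)⁻¹ * Lᴴ := by
  set B := (1 + Hᴴ * H)⁻¹
  set F : Matrix (Fin n) (Fin n ⊕ Fin m) ℂ := fromCols 1 (-Hᴴ)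
  have hB : Bᴴ = B := (isHermitian_one.add (isHermitian_conjTranspose_mul_self H)).inv
  rw [Terr_Kzero_eq_mul_fromCols, conjTranspose_mul, conjTranspose_mul, hB]
  calc L * B * F * (Fᴴ * (B * Lᴴ)) = L * B * (F * Fᴴ) * B * Lᴴ := by
        simp only [Matrix.mul_assoc]
    _ = L * B * Lᴴ := by
      rw [fromCols_one_neg_mul_conjTranspose, mul_nonsing_inv_cancel_right _ _
        (isUnit_det_one_add_conjTranspose_mul H)]
end

section
/- Spectral factorization identity (finite-dimensional verification at a point): if P solves P = G G* + F P F* − F P H*(I + H P H*)^{-1} H P F*, then for any complex z with |z| = 1 and z not an eigenvalue of F, defining H(z) = H (zI − F)^{-1} G and Δ(z) = (I + H (zI − F)^{-1} K_P)(I + H P H*)^{1/2} with K_P = F P H*(I + H P H*)^{-1}, we have Δ(z) Δ(z)* = I + H(z) H(z)*. -/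
/-!
Write `A = zI - F`, `S = I + HPH*` and `K = K_P`, so that `KS = FPH*`. Because `z̄z = 1`,
`P - FPF* = APA* + FPA* + APF*`, and the Riccati equation becomes
`GG* = APA* + FPA* + APF* + KSK*`. Conjugating by `HA⁻¹` and using `(HA⁻¹)A = H`, the first
three terms become `HPH* + HA⁻¹KS + (HA⁻¹KS)*`, so `I + H(z)H(z)*` expands to the same four
terms as `(I + HA⁻¹K) S (I + HA⁻¹K)*`; and `Δ(z)Δ(z)*` is the latter because `S^{1/2}` is
Hermitian with square `S`.
-/

open Matrix
open scoped ComplexOrder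

/-- As defined in Mathlib in December 2024 (since removed). -/
noncomputable def Matrix.PosSemidef.sqrt {n : Type*} [Fintype n] [DecidableEq n] {𝕜 : Type*}
    [RCLike 𝕜] {A : Matrix n n 𝕜} (hA : A.PosSemidef) : Matrix n n 𝕜 :=
  (hA.1.eigenvectorUnitary : Matrix n n 𝕜) *
    diagonal (((↑) : ℝ → 𝕜) ∘ (√·) ∘ hA.1.eigenvalues) *
    (star hA.1.eigenvectorUnitary : Matrix n n 𝕜)

namespace Matrix.PosSemidef

variable {n 𝕜 : Type*} [Fintype n] [DecidableEq n] [RCLike 𝕜] {A : Matrix n n 𝕜}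

theorem posSemidef_sqrt (hA : A.PosSemidef) : hA.sqrt.PosSemidef := by
  have hdiag : (diagonal (((↑) : ℝ → 𝕜) ∘ (√·) ∘ hA.1.eigenvalues)).PosSemidef :=
    posSemidef_diagonal_iff.mpr fun i => by simp [Real.sqrt_nonneg]
  simpa [sqrt, star_eq_conjTranspose] using
    hdiag.mul_mul_conjTranspose_same (hA.1.eigenvectorUnitary : Matrix n n 𝕜)

theorem sqrt_mul_self (hA : A.PosSemidef) : hA.sqrt * hA.sqrt = A := by
  set U : Matrix n n 𝕜 := ↑hA.1.eigenvectorUnitary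
  set D := diagonal (((↑) : ℝ → 𝕜) ∘ (√·) ∘ hA.1.eigenvalues)
  have hU : star U * U = 1 := Unitary.coe_star_mul_self _
  have hD : D * D = diagonal (((↑) : ℝ → 𝕜) ∘ hA.1.eigenvalues) := by
    rw [diagonal_mul_diagonal]
    congr 1
    ext i
    simp [← RCLike.ofReal_mul, Real.mul_self_sqrt (hA.eigenvalues_nonneg i)]
  calc hA.sqrt * hA.sqrt = U * D * (star U * U) * D * star U := by
        simp only [sqrt, U, D, Matrix.mul_assoc]
    _ = A := by
        rw [hU, Matrix.mul_one, Matrix.mul_assoc U D D, hD]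
        conv_rhs => rw [hA.1.spectral_theorem, Unitary.conjStarAlgAut_apply]

end Matrix.PosSemidef

section

variable {ι κ γ α : Type*} [Fintype ι] [DecidableEq ι] [Fintype κ] [DecidableEq κ] [Fintype γ]
  [CommRing α] [StarRing α]

theorem sub_mul_mul_conjTranspose_eq_of_star_mul_self {z : α} (hz : star z * z = 1)
    (F P : Matrix ι ι α) :
    P - F * P * Fᴴ = (z • 1 - F) * P * (z • 1 - F)ᴴ + F * P * (z • 1 - F)ᴴ
      + (z • 1 - F) * P * Fᴴ := by
  simp only [conjTranspose_sub, conjTranspose_smul, conjTranspose_one, Matrix.sub_mul,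
    Matrix.mul_sub, Matrix.smul_mul, Matrix.mul_smul, Matrix.one_mul, Matrix.mul_one, smul_smul,
    hz, one_smul, smul_sub]
  abel

theorem one_add_mul_inv_mul_gain_mul_conjTranspose_eq {A P X : Matrix ι ι α}
    {H : Matrix κ ι α} {S : Matrix κ κ α} {G : Matrix ι γ α} (hA : IsUnit A.det)
    (hSdef : S = 1 + H * P * Hᴴ) (hSH : S.IsHermitian) (hS : IsUnit S.det)
    (hG : G * Gᴴ = A * P * Aᴴ + X * Aᴴ + A * Xᴴ + X * Hᴴ * S⁻¹ * H * Xᴴ) :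
    (1 + H * A⁻¹ * (X * Hᴴ * S⁻¹)) * S * (1 + H * A⁻¹ * (X * Hᴴ * S⁻¹))ᴴ
      = 1 + H * A⁻¹ * G * (H * A⁻¹ * G)ᴴ := by
  set B := H * A⁻¹
  have hBA : B * A = H := nonsing_inv_mul_cancel_right A H hA
  have hgain : X * Hᴴ * S⁻¹ * S = X * Hᴴ := nonsing_inv_mul_cancel_right S _ hS
  have hgainH : S * (X * Hᴴ * S⁻¹)ᴴ = H * Xᴴ := by
    simpa only [conjTranspose_mul, conjTranspose_conjTranspose, hSH.eq, Matrix.mul_assoc]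
      using congrArg conjTranspose hgain
  calc (1 + B * (X * Hᴴ * S⁻¹)) * S * (1 + B * (X * Hᴴ * S⁻¹))ᴴ
      = S + B * (X * Hᴴ * S⁻¹ * S) + S * (X * Hᴴ * S⁻¹)ᴴ * Bᴴ
          + B * (X * Hᴴ * S⁻¹) * (S * (X * Hᴴ * S⁻¹)ᴴ) * Bᴴ := by
        simp only [conjTranspose_add, conjTranspose_one, conjTranspose_mul, Matrix.add_mul,
          Matrix.mul_add, Matrix.one_mul, Matrix.mul_one, Matrix.mul_assoc]
        abel
    _ = 1 + H * P * Hᴴ + B * X * Hᴴ + H * Xᴴ * Bᴴ + B * (X * Hᴴ * S⁻¹ * H * Xᴴ) * Bᴴ := by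
        rw [hgain, hgainH]
        nth_rw 1 [hSdef]
        simp only [Matrix.mul_assoc]
    _ = 1 + B * (G * Gᴴ) * Bᴴ := by
        rw [hG, ← hBA]
        simp only [conjTranspose_mul, Matrix.add_mul, Matrix.mul_add, Matrix.mul_assoc]
        abel
    _ = 1 + B * G * (B * G)ᴴ := by simp only [conjTranspose_mul, Matrix.mul_assoc]

end

/-- spectral factorization at a point of the unit circle: if `P ⪰ 0` solves the
Riccati equation, `|z| = 1` and `z` is not an eigenvalue of `F`, then with
`H(z) = H (zI − F)⁻¹ G`, `K_P = F P H*(I + H P H*)⁻¹`, and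
`Δ(z) = (I + H (zI − F)⁻¹ K_P)(I + H P H*)^{1/2}` (positive semidefinite square root),
we have `Δ(z) Δ(z)* = I + H(z) H(z)*`. -/
theorem spectral_factorization_at_point {n q m : ℕ}
    (F : Matrix (Fin n) (Fin n) ℂ) (G : Matrix (Fin n) (Fin q) ℂ)
    (H : Matrix (Fin m) (Fin n) ℂ) (P : Matrix (Fin n) (Fin n) ℂ)
    (hP : P.PosSemidef)
    (hRic : P = G * Gᴴ + F * P * Fᴴ
        - F * P * Hᴴ * (1 + H * P * Hᴴ)⁻¹ * H * P * Fᴴ)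
    (hPD : (1 + H * P * Hᴴ).PosSemidef)
    (z : ℂ) (hz : ‖z‖ = 1) (hzF : IsUnit (z • (1 : Matrix (Fin n) (Fin n) ℂ) - F)) :
    letI Hz := H * (z • (1 : Matrix (Fin n) (Fin n) ℂ) - F)⁻¹ * G
    letI KP := F * P * Hᴴ * (1 + H * P * Hᴴ)⁻¹
    letI Δz := (1 + H * (z • (1 : Matrix (Fin n) (Fin n) ℂ) - F)⁻¹ * KP) * hPD.sqrt
    Δz * Δzᴴ = 1 + Hz * Hzᴴ := by
  have hR : hPD.sqrt * hPD.sqrtᴴ = 1 + H * P * Hᴴ := by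
    rw [hPD.posSemidef_sqrt.1.eq, hPD.sqrt_mul_self]
  generalize hPD.sqrt = R at hR ⊢
  set A := z • (1 : Matrix (Fin n) (Fin n) ℂ) - F
  set S := 1 + H * P * Hᴴ with hS
  have hSdet : IsUnit S.det := (isUnit_iff_isUnit_det S).mp
    (PosDef.one.add_posSemidef (hP.mul_mul_conjTranspose_same H)).isUnit
  have hstar : star z * z = 1 := by simpa [hz] using Complex.conj_mul' z
  have hG : G * Gᴴ = A * P * Aᴴ + F * P * Aᴴ + A * (F * P)ᴴ
      + F * P * Hᴴ * S⁻¹ * H * (F * P)ᴴ := by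
    calc G * Gᴴ = (G * Gᴴ + F * P * Fᴴ - F * P * Hᴴ * S⁻¹ * H * P * Fᴴ) - F * P * Fᴴ
          + F * P * Hᴴ * S⁻¹ * H * P * Fᴴ := by abel
      _ = P - F * P * Fᴴ + F * P * Hᴴ * S⁻¹ * H * P * Fᴴ := by rw [← hRic]
      _ = _ := by
        rw [sub_mul_mul_conjTranspose_eq_of_star_mul_self hstar]
        simp only [conjTranspose_mul, hP.1.eq, Matrix.mul_assoc, A]
  calc _ = (1 + H * A⁻¹ * (F * P * Hᴴ * S⁻¹)) * S * (1 + H * A⁻¹ * (F * P * Hᴴ * S⁻¹))ᴴ := by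
        rw [conjTranspose_mul, ← Matrix.mul_assoc, Matrix.mul_assoc _ R, hR]
    _ = _ := one_add_mul_inv_mul_gain_mul_conjTranspose_eq
          ((isUnit_iff_isUnit_det A).mp hzF) hS hPD.1 hSdet hG
end
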